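/- Let X₁ ↪ X₀ be a densely and continuously injected couple of complex Banach spaces, θ ∈ [0,π), c ≥ 0, and let A : X₁ → X₀ be such that A + c is R-sectorial of angle θ with sectorial bound K ≥ 1 and R-sectorial bound R ≥ 1. Let B : X₁ → X₀ be a bounded operator with ‖(A − B)(A + c)⁻¹‖_{L(X₀)} < (1/2) min{1/(1+K), 1/(1+R)}. Then S_θ ⊆ ρ(−(B + c)) and B + c is R-sectorial of angle θ with R-sectorial bound 2R. -/

import Mathlib

noncomputable section

open MeasureTheory Set
open scoped ENNReal NNReal

/-- A couple of complex Banach spaces `X₁ ↪ X₀`, continuously and densely injected. -/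
structure BanachCouple (X₁ X₀ : Type*) [NormedAddCommGroup X₁] [NormedSpace ℂ X₁]
    [NormedAddCommGroup X₀] [NormedSpace ℂ X₀] where
  J : X₁ →L[ℂ] X₀
  inj : Function.Injective J
  dense : DenseRange J

variable {X₁ X₀ : Type*} [NormedAddCommGroup X₁] [NormedSpace ℂ X₁]
  [NormedAddCommGroup X₀] [NormedSpace ℂ X₀]

/-- The sector `S_θ = {λ ∈ ℂ : |arg λ| ≤ θ} ∪ {0}`. -/
def SectorSet (θ : ℝ) : Set ℂ := {z | |Complex.arg z| ≤ θ} ∪ {0}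

/-- `R : X₀ → X₁` is the resolvent `(A + lam)⁻¹` of the unbounded operator `A` in `X₀`
(with domain `X₁`, viewed in `X₀` via the embedding `C.J`) at the point `lam`,
i.e. `lam ∈ ρ(-A)` with resolvent `R`. -/
def IsResolventAt (C : BanachCouple X₁ X₀) (A : X₁ →L[ℂ] X₀) (lam : ℂ)
    (R : X₀ →L[ℂ] X₁) : Prop :=
  (∀ x : X₀, A (R x) + lam • C.J (R x) = x) ∧ (∀ y : X₁, R (A y + lam • C.J y) = y)

/-- `lam ∈ ρ(-A)`. -/
def InResolvent (C : BanachCouple X₁ X₀) (A : X₁ →L[ℂ] X₀) (lam : ℂ) : Prop :=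
  ∃ R : X₀ →L[ℂ] X₁, IsResolventAt C A lam R

/-- `A` is (invertible) sectorial of angle `θ` with sectorial bound `K`:
`S_θ ⊆ ρ(-A)` and `(1+|λ|)‖(A+λ)⁻¹‖_{L(X₀)} ≤ K` on `S_θ`. -/
def IsSectorial (C : BanachCouple X₁ X₀) (A : X₁ →L[ℂ] X₀) (θ K : ℝ) : Prop :=
  1 ≤ K ∧ ∀ lam ∈ SectorSet θ, ∃ R : X₀ →L[ℂ] X₁, IsResolventAt C A lam R ∧
    (1 + ‖lam‖) * ‖C.J.comp R‖ ≤ K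

/-- The Rademacher functions. -/
def rademacher (k : ℕ) (t : ℝ) : ℝ := (-1 : ℝ) ^ ⌊(2 : ℝ) ^ (k + 1) * t⌋

/-- The norm of `L²(0,1;X₀)`. -/
def L2norm01 (f : ℝ → X₀) : ℝ := (∫ t in Set.Ioc (0:ℝ) 1, ‖f t‖ ^ 2) ^ ((1:ℝ)/2)

/-- The `R`-boundedness condition (with bound `K`) of the family
`{λ(A+λ)⁻¹ : λ ∈ S_θ \ {0}}`, expressed through the Rademacher functions. -/
def RBound (C : BanachCouple X₁ X₀) (A : X₁ →L[ℂ] X₀) (θ K : ℝ) : Prop :=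
  ∀ (N : ℕ) (lam : Fin N → ℂ) (x : Fin N → X₀) (R : Fin N → (X₀ →L[ℂ] X₁)),
    (∀ k, lam k ∈ SectorSet θ ∧ lam k ≠ 0 ∧ IsResolventAt C A (lam k) (R k)) →
    L2norm01 (fun t => ∑ k : Fin N, rademacher k.val t • (lam k • C.J (R k (x k)))) ≤
      K * L2norm01 (fun t => ∑ k : Fin N, rademacher k.val t • x k)

/-- `A` is `R`-sectorial of angle `θ` with `R`-sectorial bound `K`. -/
def IsRSectorial (C : BanachCouple X₁ X₀) (A : X₁ →L[ℂ] X₀) (θ K : ℝ) : Prop :=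
  1 ≤ K ∧ (∃ K', IsSectorial C A θ K') ∧ RBound C A θ K

/-- The operator `A + c : X₁ → X₀`. -/
def shiftOp (C : BanachCouple X₁ X₀) (A : X₁ →L[ℂ] X₀) (c : ℝ) : X₁ →L[ℂ] X₀ :=
  A + (c : ℂ) • C.J

/-- `X` has the unconditionality of martingale differences (UMD) property. -/
def IsUMD (X : Type*) [NormedAddCommGroup X] [NormedSpace ℂ X] [CompleteSpace X] : Prop :=
  ∃ β : ℝ, 0 < β ∧ ∀ (Ω : Type) (mΩ : MeasurableSpace Ω) (μ : Measure Ω),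
    IsProbabilityMeasure μ →
    ∀ (ℱ : Filtration ℕ mΩ) (f : ℕ → Ω → X), Martingale f ℱ μ →
    ∀ ε : ℕ → ℝ, (∀ n, ε n = 1 ∨ ε n = -1) → ∀ n : ℕ,
      eLpNorm (fun ω => ∑ k ∈ Finset.range n, ε k • (f (k+1) ω - f k ω)) 2 μ ≤
        ENNReal.ofReal β * eLpNorm (fun ω => f n ω - f 0 ω) 2 μ

/-- The `K`-functional of the couple `(X₁, X₀)`. -/
def interpK (C : BanachCouple X₁ X₀) (t : ℝ) (x : X₀) : ℝ :=
  sInf {r : ℝ | ∃ a : X₁, r = ‖a‖ + t * ‖x - C.J a‖}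

/-- The norm of the real interpolation space `(X₁, X₀)_{φ,q}`. -/
def interpNorm (C : BanachCouple X₁ X₀) (φ q : ℝ) (x : X₀) : ℝ≥0∞ :=
  (∫⁻ t in Set.Ioi (0:ℝ), ENNReal.ofReal ((t ^ (-φ) * interpK C t x) ^ q / t)) ^ (1/q)

/-- The real interpolation space `(X₁, X₀)_{φ,q}`, as a subset of `X₀`. -/
def interpSpace (C : BanachCouple X₁ X₀) (φ q : ℝ) : Set X₀ :=
  {x | interpNorm C φ q x < ⊤}

/-- The interpolation norm, as a real number. -/
def interpNormR (C : BanachCouple X₁ X₀) (φ q : ℝ) (x : X₀) : ℝ :=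
  (interpNorm C φ q x).toReal

/-- Membership in `L^q(a,b;X₀)`. -/
def MemLqI (q a b : ℝ) (f : ℝ → X₀) : Prop :=
  MemLp f (ENNReal.ofReal q) (volume.restrict (Set.Ioc a b))

/-- The norm of `L^q(a,b;X₀)`. -/
def LqNorm (q a b : ℝ) (f : ℝ → X₀) : ℝ :=
  (eLpNorm f (ENNReal.ofReal q) (volume.restrict (Set.Ioc a b))).toReal

/-- The domain `D(A^k)` of the `k`-th power of the unbounded operator `A` in `X₀`. -/
def domPow (C : BanachCouple X₁ X₀) (A : X₁ →L[ℂ] X₀) : ℕ → Set X₀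
  | 0 => Set.univ
  | k + 1 => {ξ | ∃ x : X₁, C.J x = ξ ∧ A x ∈ domPow C A k}

open Classical in
/-- The (unique, by injectivity of `C.J`) lift of an element of `X₀` to `X₁`, when it exists. -/
def liftX (C : BanachCouple X₁ X₀) (ξ : X₀) : X₁ :=
  if h : ∃ x : X₁, C.J x = ξ then h.choose else 0

/-- The `k`-th power `A^k` applied to an element of `X₀` (junk value outside `D(A^k)`). -/
def Apow (C : BanachCouple X₁ X₀) (A : X₁ →L[ℂ] X₀) : ℕ → X₀ → X₀
  | 0 => fun ξ => ξ
  | k + 1 => fun ξ => Apow C A k (A (liftX C ξ))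

/-- The graph norm `‖·‖_{D(A^k)} = ∑_{i ≤ k} ‖A^i ·‖_{X₀}`. -/
def graphNorm (C : BanachCouple X₁ X₀) (A : X₁ →L[ℂ] X₀) (k : ℕ) (ξ : X₀) : ℝ :=
  ∑ i ∈ Finset.range (k + 1), ‖Apow C A i ξ‖

/-- `v ∈ C^∞(s; D(A^k))`: all time-derivatives exist, take values in `D(A^k)` and are
continuous together with `A^i`, `i ≤ k`, applied to them. -/
def SmoothIntoDom (C : BanachCouple X₁ X₀) (A : X₁ →L[ℂ] X₀) (s : Set ℝ) (k : ℕ)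
    (v : ℝ → X₀) : Prop :=
  ∃ D : ℕ → ℝ → X₀, D 0 = v ∧
    (∀ j : ℕ, ∀ t ∈ s, HasDerivAt (D j) (D (j+1) t) t) ∧
    (∀ j : ℕ, ∀ t ∈ s, D j t ∈ domPow C A k) ∧
    (∀ j : ℕ, ∀ i ≤ k, ContinuousOn (fun t => Apow C A i (D j t)) s)

/-- A strongly continuous semigroup of bounded operators on `X₀`. -/
structure IsOpSemigroup (Sg : ℝ → X₀ →L[ℂ] X₀) : Prop where
  id : Sg 0 = ContinuousLinearMap.id ℂ X₀
  comp : ∀ s ≥ (0:ℝ), ∀ t ≥ (0:ℝ), Sg (s + t) = (Sg s).comp (Sg t)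
  cont : ∀ x : X₀, ContinuousOn (fun t => Sg t x) (Set.Ici 0)

/-- `-A` is the infinitesimal generator of the strongly continuous semigroup `Sg`. -/
def GeneratedBy (C : BanachCouple X₁ X₀) (A : X₁ →L[ℂ] X₀) (Sg : ℝ → X₀ →L[ℂ] X₀) : Prop :=
  IsOpSemigroup Sg ∧ ∀ x : X₁, ∀ t ∈ Set.Ici (0:ℝ),
    HasDerivWithinAt (fun s => Sg s (C.J x)) (-(Sg t (A x))) (Set.Ici 0) t

/-- `-A` generates the (strongly continuous) analytic semigroup `Sg` on `X₀`:
in addition to generation, `Sg t` smooths into `D(A)` for `t > 0` with the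
characteristic bound `‖A Sg(t)‖ ≤ M/t` and `t ↦ Sg t ξ` is differentiable for `t > 0`. -/
def IsAnalyticSemigroupGen (C : BanachCouple X₁ X₀) (A : X₁ →L[ℂ] X₀)
    (Sg : ℝ → X₀ →L[ℂ] X₀) : Prop :=
  GeneratedBy C A Sg ∧
  (∀ t > (0:ℝ), ∀ ξ : X₀, Sg t ξ ∈ domPow C A 1) ∧
  (∃ M > (0:ℝ), ∀ t ∈ Set.Ioc (0:ℝ) 1, ∀ ξ : X₀, ‖Apow C A 1 (Sg t ξ)‖ ≤ M / t * ‖ξ‖) ∧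
  (∀ ξ : X₀, ∀ t > (0:ℝ), HasDerivAt (fun s => Sg s ξ) (-(Apow C A 1 (Sg t ξ))) t)

/-!
With `S = (A - B)(A + c)⁻¹` and `R_λ = (A + c + λ)⁻¹`, the identity `(A - B)R_λ = S(1 - λR_λ)`
gives `‖(A - B)R_λ‖ ≤ ‖S‖(1 + K) ≤ 1/2`, so `B + c + λ = (1 - (A - B)R_λ)(A + c + λ)` is invertible
by a Neumann series. For the bounds, `y = (A + c + λ)(B + c + λ)⁻¹ z` satisfies
`y = z + S(y - λR_λ y)` and `λ(B + c + λ)⁻¹ z = λR_λ y`. Measured in `X₀`, or in Rademacher norms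
using the `R`-bound of `A + c`, the perturbation term costs at most half the norm of `y`, so `y` is
at most twice `z`.
-/

section Rademacher

variable {E : Type*} [NormedAddCommGroup E]

theorem measurable_rademacher (k : ℕ) : Measurable (rademacher k) :=
  (measurable_from_top (f := fun n : ℤ => (-1 : ℝ) ^ n)).comp
    (Int.measurable_floor.comp (measurable_id.const_mul _))

theorem abs_rademacher (k : ℕ) (t : ℝ) : |rademacher k t| = 1 := by
  rcases Int.even_or_odd ⌊(2 : ℝ) ^ (k + 1) * t⌋ with h | h <;>
    simp [rademacher, h.neg_one_zpow]

def radSum {N : ℕ} (v : Fin N → X₀) : ℝ → X₀ :=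
  fun t => ∑ k : Fin N, rademacher k.val t • v k

theorem memLp_radSum {N : ℕ} (v : Fin N → X₀) :
    MemLp (radSum v) 2 (volume.restrict (Ioc (0 : ℝ) 1)) := by
  have hcont : Continuous fun r : Fin N → ℝ => ∑ k : Fin N, r k • v k :=
    continuous_finsetSum _ fun k _ => (continuous_apply k).smul continuous_const
  have hmeas : StronglyMeasurable (radSum v) := hcont.comp_stronglyMeasurable
    (measurable_pi_lambda _ fun k : Fin N => measurable_rademacher k.val).stronglyMeasurable
  refine MemLp.of_bound hmeas.aestronglyMeasurable (∑ k : Fin N, ‖v k‖) (ae_of_all _ fun t => ?_)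
  refine (norm_sum_le _ _).trans (Finset.sum_le_sum fun k _ => ?_)
  rw [norm_smul, Real.norm_eq_abs, abs_rademacher, one_mul]

theorem L2norm01_nonneg (f : ℝ → E) : 0 ≤ L2norm01 f :=
  Real.rpow_nonneg (integral_nonneg fun _ => by positivity) _

theorem L2norm01_eq_toReal_eLpNorm {f : ℝ → E}
    (hf : MemLp f 2 (volume.restrict (Ioc (0 : ℝ) 1))) :
    L2norm01 f = (eLpNorm f 2 (volume.restrict (Ioc (0 : ℝ) 1))).toReal := by
  rw [hf.eLpNorm_eq_integral_rpow_norm two_ne_zero ENNReal.ofNat_ne_top,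
    ENNReal.toReal_ofReal (by positivity)]
  norm_num [L2norm01]

theorem L2norm01_sub_le {f g : ℝ → E}
    (hf : MemLp f 2 (volume.restrict (Ioc (0 : ℝ) 1)))
    (hg : MemLp g 2 (volume.restrict (Ioc (0 : ℝ) 1))) :
    L2norm01 (f - g) ≤ L2norm01 f + L2norm01 g := by
  rw [L2norm01_eq_toReal_eLpNorm (hf.sub hg), L2norm01_eq_toReal_eLpNorm hf,
    L2norm01_eq_toReal_eLpNorm hg]
  exact ENNReal.toReal_le_add (eLpNorm_sub_le hf.1 hg.1 one_le_two) hf.2.ne hg.2.ne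

theorem L2norm01_add_le {f g : ℝ → E}
    (hf : MemLp f 2 (volume.restrict (Ioc (0 : ℝ) 1)))
    (hg : MemLp g 2 (volume.restrict (Ioc (0 : ℝ) 1))) :
    L2norm01 (f + g) ≤ L2norm01 f + L2norm01 g := by
  rw [L2norm01_eq_toReal_eLpNorm (hf.add hg), L2norm01_eq_toReal_eLpNorm hf,
    L2norm01_eq_toReal_eLpNorm hg]
  exact ENNReal.toReal_le_add (eLpNorm_add_le hf.1 hg.1 one_le_two) hf.2.ne hg.2.ne

theorem L2norm01_map_le {F : Type*} [NormedSpace ℂ E] [NormedAddCommGroup F] [NormedSpace ℂ F]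
    {f : ℝ → E}
    (hf : MemLp f 2 (volume.restrict (Ioc (0 : ℝ) 1))) (S : E →L[ℂ] F) :
    L2norm01 (fun t => S (f t)) ≤ ‖S‖ * L2norm01 f := by
  have hSf : MemLp (fun t => S (f t)) 2 (volume.restrict (Ioc (0 : ℝ) 1)) := S.comp_memLp' hf
  rw [L2norm01_eq_toReal_eLpNorm hSf, L2norm01_eq_toReal_eLpNorm hf,
    ← coe_nnnorm, ← ENNReal.coe_toReal, ← ENNReal.toReal_mul]
  refine ENNReal.toReal_mono (ENNReal.mul_ne_top ENNReal.coe_ne_top hf.2.ne) ?_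
  simpa [ENNReal.smul_def] using eLpNorm_le_nnreal_smul_eLpNorm_of_ae_le_mul
    (ae_of_all _ fun t => S.le_opNNNorm (f t)) 2

end Rademacher

theorem ContinuousLinearMap.norm_le_two_mul_of_eq_add {E : Type*} [SeminormedAddCommGroup E]
    [NormedSpace ℂ E] {T : E →L[ℂ] E} (hT : ‖T‖ ≤ 1 / 2) {y z : E} (hy : y = z + T y) :
    ‖y‖ ≤ 2 * ‖z‖ := by
  have hTy : ‖T y‖ ≤ 1 / 2 * ‖y‖ :=
    (T.le_opNorm y).trans (mul_le_mul_of_nonneg_right hT (norm_nonneg y))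
  have hyz := norm_add_le z (T y)
  rw [← hy] at hyz
  linarith

theorem shiftOp_sub_shiftOp (C : BanachCouple X₁ X₀) (A B : X₁ →L[ℂ] X₀) (c : ℝ) :
    shiftOp C A c - shiftOp C B c = A - B := by
  simp only [shiftOp, add_sub_add_right_eq_sub]

namespace IsResolventAt

variable {C : BanachCouple X₁ X₀} {A B : X₁ →L[ℂ] X₀} {lam : ℂ} {R : X₀ →L[ℂ] X₁}

theorem comp_eq_comp_sub {R₀ : X₀ →L[ℂ] X₁} (hR₀ : IsResolventAt C A 0 R₀)
    (hR : IsResolventAt C A lam R) (D : X₁ →L[ℂ] X₀) :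
    D.comp R = (D.comp R₀).comp (ContinuousLinearMap.id ℂ X₀ - lam • C.J.comp R) := by
  ext z
  have hR₀A : R₀ (A (R z)) = R z := by simpa using hR₀.2 (R z)
  simp only [ContinuousLinearMap.comp_apply, sub_apply,
    ContinuousLinearMap.id_apply, smul_apply]
  rw [← eq_sub_of_add_eq (hR.1 z), hR₀A]

theorem norm_comp_le {R₀ : X₀ →L[ℂ] X₁} {K : ℝ} (hR₀ : IsResolventAt C A 0 R₀)
    (hR : IsResolventAt C A lam R) (hK : (1 + ‖lam‖) * ‖C.J.comp R‖ ≤ K)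
    (D : X₁ →L[ℂ] X₀) : ‖D.comp R‖ ≤ ‖D.comp R₀‖ * (1 + K) := by
  rw [hR₀.comp_eq_comp_sub hR D]
  refine (ContinuousLinearMap.opNorm_comp_le _ _).trans
    (mul_le_mul_of_nonneg_left ?_ (norm_nonneg _))
  calc ‖ContinuousLinearMap.id ℂ X₀ - lam • C.J.comp R‖
      ≤ ‖ContinuousLinearMap.id ℂ X₀‖ + ‖lam‖ * ‖C.J.comp R‖ :=
        (norm_sub_le _ _).trans_eq (congrArg _ (norm_smul _ _))
    _ ≤ 1 + K := by
        nlinarith [ContinuousLinearMap.norm_id_le (𝕜 := ℂ) (E := X₀), norm_nonneg (C.J.comp R)]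

theorem of_unit_eq_one_sub (hR : IsResolventAt C A lam R) (u : (X₀ →L[ℂ] X₀)ˣ)
    (hu : (u : X₀ →L[ℂ] X₀) = 1 - (A - B).comp R) :
    IsResolventAt C B lam (R.comp (↑u⁻¹ : X₀ →L[ℂ] X₀)) := by
  have hu_apply : ∀ z, (u : X₀ →L[ℂ] X₀) z = z - (A - B) (R z) := fun z => by rw [hu]; rfl
  have hBA : ∀ y, B y + lam • C.J y = A y + lam • C.J y - (A - B) y := fun y => by
    rw [sub_apply]; abel
  constructor
  · intro z
    rw [ContinuousLinearMap.comp_apply, hBA, hR.1, ← hu_apply]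
    exact DFunLike.congr_fun u.mul_inv z
  · intro y
    have hAy := hR.2 y
    rw [ContinuousLinearMap.comp_apply, hBA, ← congrArg (A - B) hAy, ← hu_apply]
    exact (congrArg R (DFunLike.congr_fun u.inv_mul _)).trans hAy

theorem exists_eq_add_apply {Q : X₀ →L[ℂ] X₁} (hR : IsResolventAt C A lam R)
    (hQ : IsResolventAt C B lam Q) (z : X₀) : ∃ y, Q z = R y ∧ y = z + (A - B) (R y) := by
  refine ⟨A (Q z) + lam • C.J (Q z), (hR.2 (Q z)).symm, ?_⟩
  calc A (Q z) + lam • C.J (Q z) = B (Q z) + lam • C.J (Q z) + (A - B) (Q z) := by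
        rw [sub_apply]; abel
    _ = z + (A - B) (R (A (Q z) + lam • C.J (Q z))) := by rw [hQ.1 z, hR.2 (Q z)]

end IsResolventAt

theorem IsSectorial.inResolvent {C : BanachCouple X₁ X₀} {A : X₁ →L[ℂ] X₀} {θ K : ℝ}
    (hA : IsSectorial C A θ K) : ∀ lam ∈ SectorSet θ, InResolvent C A lam :=
  fun lam hlam => (hA.2 lam hlam).imp fun _ h => h.1

section Perturbation

variable {C : BanachCouple X₁ X₀} {A B : X₁ →L[ℂ] X₀} {R₀ : X₀ →L[ℂ] X₁} {θ K : ℝ}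

theorem IsSectorial.of_perturbation [CompleteSpace X₀] (hA : IsSectorial C A θ K)
    (hR₀ : IsResolventAt C A 0 R₀) (hsmall : ‖(A - B).comp R₀‖ * (1 + K) ≤ 1 / 2) :
    IsSectorial C B θ (2 * K) := by
  refine ⟨by linarith [hA.1], fun lam hlam => ?_⟩
  obtain ⟨R, hR, hRK⟩ := hA.2 lam hlam
  have hT : ‖(A - B).comp R‖ ≤ 1 / 2 := (hR₀.norm_comp_le hR hRK _).trans hsmall
  obtain ⟨Q, hQ⟩ : InResolvent C B lam :=
    ⟨_, hR.of_unit_eq_one_sub (Units.oneSub _ (by linarith)) rfl⟩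
  refine ⟨Q, hQ, ?_⟩
  have hJQ : ‖C.J.comp Q‖ ≤ ‖C.J.comp R‖ * 2 :=
    ContinuousLinearMap.opNorm_le_bound _ (by positivity) fun z => by
      obtain ⟨y, hQy, hy⟩ := hR.exists_eq_add_apply hQ z
      have hyz := ContinuousLinearMap.norm_le_two_mul_of_eq_add hT hy
      calc ‖C.J.comp Q z‖ = ‖C.J.comp R y‖ := by rw [ContinuousLinearMap.comp_apply, hQy]; rfl
        _ ≤ ‖C.J.comp R‖ * ‖y‖ := (C.J.comp R).le_opNorm y
        _ ≤ ‖C.J.comp R‖ * 2 * ‖z‖ := by nlinarith [norm_nonneg (C.J.comp R)]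
  nlinarith [norm_nonneg lam]

theorem RBound.of_perturbation {R : ℝ} (hres : ∀ lam ∈ SectorSet θ, InResolvent C A lam)
    (hRB : RBound C A θ R) (hR : 0 ≤ R) (hR₀ : IsResolventAt C A 0 R₀)
    (hsmall : ‖(A - B).comp R₀‖ * (1 + R) ≤ 1 / 2) : RBound C B θ (2 * R) := by
  intro N lam x Q hQ
  choose Rk hRk using fun k => hres (lam k) (hQ k).1
  choose y hQy hy using fun k => (hRk k).exists_eq_add_apply (hQ k).2.2 (x k)
  set S := (A - B).comp R₀
  set g : Fin N → X₀ := fun k => lam k • C.J (Rk k (y k))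
  have hg : L2norm01 (radSum g) ≤ R * L2norm01 (radSum y) :=
    hRB N lam y Rk fun k => ⟨(hQ k).1, (hQ k).2.1, hRk k⟩
  have hyk : ∀ k, y k = x k + S (y k - g k) := fun k =>
    (hy k).trans (congrArg (x k + ·)
      (DFunLike.congr_fun (hR₀.comp_eq_comp_sub (hRk k) (A - B)) (y k)))
  have hradSum : radSum y = radSum x + S ∘ (radSum y - radSum g) := by
    nth_rewrite 1 [funext hyk]
    funext t
    simp only [radSum, Pi.add_apply, Function.comp_apply, Pi.sub_apply, smul_add, smul_sub,
      Finset.sum_add_distrib, Finset.sum_sub_distrib, map_sub, map_sum,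
      ContinuousLinearMap.map_smul_of_tower]
  have hy_le : L2norm01 (radSum y) ≤
      L2norm01 (radSum x) + ‖S‖ * (L2norm01 (radSum y) + L2norm01 (radSum g)) :=
    calc L2norm01 (radSum y)
        ≤ L2norm01 (radSum x) + L2norm01 (S ∘ (radSum y - radSum g)) := by
          refine (congrArg L2norm01 hradSum).trans_le ?_
          exact L2norm01_add_le (memLp_radSum x)
            (S.comp_memLp' ((memLp_radSum y).sub (memLp_radSum g)))
      _ ≤ L2norm01 (radSum x) + ‖S‖ * L2norm01 (radSum y - radSum g) := by
          gcongr
          exact L2norm01_map_le ((memLp_radSum y).sub (memLp_radSum g)) S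
      _ ≤ L2norm01 (radSum x) + ‖S‖ * (L2norm01 (radSum y) + L2norm01 (radSum g)) := by
          gcongr
          exact L2norm01_sub_le (memLp_radSum y) (memLp_radSum g)
  have hyx : L2norm01 (radSum y) ≤ 2 * L2norm01 (radSum x) := by
    nlinarith [mul_le_mul_of_nonneg_left hg (norm_nonneg S),
      mul_le_mul_of_nonneg_right hsmall (L2norm01_nonneg (radSum y))]
  change L2norm01 (radSum fun k => lam k • C.J (Q k (x k))) ≤ 2 * R * L2norm01 (radSum x)
  simp only [hQy]
  calc L2norm01 (radSum g) ≤ R * L2norm01 (radSum y) := hg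
    _ ≤ 2 * R * L2norm01 (radSum x) := by linarith [mul_le_mul_of_nonneg_left hyx hR]

end Perturbation

theorem neumann_series_R_sectorial_perturbation_general
    {X₁ X₀ : Type*} [NormedAddCommGroup X₁] [NormedSpace ℂ X₁]
    [NormedAddCommGroup X₀] [NormedSpace ℂ X₀] [CompleteSpace X₀]
    (C : BanachCouple X₁ X₀) (θ c K R : ℝ)
    (A B : X₁ →L[ℂ] X₀)
    (hA : IsSectorial C (shiftOp C A c) θ K)
    (hAR : IsRSectorial C (shiftOp C A c) θ R)
    (R0 : X₀ →L[ℂ] X₁) (hR0 : IsResolventAt C (shiftOp C A c) 0 R0)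
    (hsmall : ‖(A - B).comp R0‖ < (1/2) * min (1 / (1 + K)) (1 / (1 + R))) :
    (∀ lam ∈ SectorSet θ, InResolvent C (shiftOp C B c) lam) ∧
    IsRSectorial C (shiftOp C B c) θ (2 * R) := by
  rw [← shiftOp_sub_shiftOp C A B c] at hsmall
  set S := (shiftOp C A c - shiftOp C B c).comp R0
  have hhalf : ∀ a, 1 ≤ a → ‖S‖ < 1 / 2 * (1 / (1 + a)) → ‖S‖ * (1 + a) ≤ 1 / 2 := by
    intro a ha h
    rw [mul_one_div, lt_div_iff₀ (by linarith)] at h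
    exact h.le
  have hB := hA.of_perturbation hR0
    (hhalf K hA.1 (hsmall.trans_le (by gcongr; exact min_le_left _ _)))
  refine ⟨hB.inResolvent, by linarith [hAR.1], ⟨_, hB⟩, ?_⟩
  exact hAR.2.2.of_perturbation hA.inResolvent (by linarith [hAR.1]) hR0
    (hhalf R hAR.1 (hsmall.trans_le (by gcongr; exact min_le_right _ _)))

/-- **Neumann-series perturbation of `R`-sectorial operators.**
Let `A + c` be `R`-sectorial of angle `θ` with sectorial bound `K ≥ 1` and `R`-sectorial
bound `R ≥ 1`, and let `B : X₁ → X₀` be bounded with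
`‖(A − B)(A + c)⁻¹‖_{L(X₀)} < (1/2) min{1/(1+K), 1/(1+R)}`.  Then `S_θ ⊆ ρ(−(B + c))`
and `B + c` is `R`-sectorial of angle `θ` with `R`-sectorial bound `2R`. -/
theorem neumann_series_R_sectorial_perturbation
    {X₁ X₀ : Type*} [NormedAddCommGroup X₁] [NormedSpace ℂ X₁] [CompleteSpace X₁]
    [NormedAddCommGroup X₀] [NormedSpace ℂ X₀] [CompleteSpace X₀]
    (C : BanachCouple X₁ X₀) (θ c K R : ℝ)
    (hθ : θ ∈ Set.Ico 0 Real.pi) (hc : 0 ≤ c) (hK : 1 ≤ K) (hR : 1 ≤ R)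
    (A B : X₁ →L[ℂ] X₀)
    (hA : IsSectorial C (shiftOp C A c) θ K)
    (hAR : IsRSectorial C (shiftOp C A c) θ R)
    (R0 : X₀ →L[ℂ] X₁) (hR0 : IsResolventAt C (shiftOp C A c) 0 R0)
    (hsmall : ‖(A - B).comp R0‖ < (1/2) * min (1 / (1 + K)) (1 / (1 + R))) :
    (∀ lam ∈ SectorSet θ, InResolvent C (shiftOp C B c) lam) ∧
    IsRSectorial C (shiftOp C B c) θ (2 * R) :=
  neumann_series_R_sectorial_perturbation_general C θ c K R A B hA hAR R0 hR0 hsmall
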